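/- arXiv:math/0503298 — 5 statements merged into one kernel-verified Lean document; each statement's English description precedes it below -/
import Mathlib

section
/- Let ε > 0, δ ≥ 0, g ∈ ℓ², and let F : ℂ → ℂ satisfy F(0) = 0 and |F(z₁) − F(z₂)| ≤ c(|z₁|^β + |z₂|^β)|z₁ − z₂| for all z₁, z₂ ∈ ℂ, for some c > 0, β ≥ 0. Let u, v : [0, T] → ℓ² be continuously differentiable solutions of the DNLS equation i u̇_n + (1/ε)(u_{n−1} − 2u_n + u_{n+1}) + iδ u_n + F(u_n) = g_n such that ‖u(t)‖_{ℓ²} ≤ 2R and ‖v(t)‖_{ℓ²} ≤ 2R for all t ∈ [0, T]. Then for all t ∈ [0, T], ‖u(t) − v(t)‖_{ℓ²} ≤ e^{L₁(2R)t} ‖u(0) − v(0)‖_{ℓ²}, where L₁(2R) = δ + 2c(2R)^β. -/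
/-! The difference `w = u - v` satisfies `i ẇ = -ε⁻¹ Δw - iδ w - (F(u) - F(v))` site by site.
Pairing with `w` in `ℓ²` and taking real parts, the Laplacian term drops out because `⟨w, Δw⟩`
is real, the damping contributes `-δ ‖w‖²`, and the growth condition on `F` together with
`|u_n|, |v_n| ≤ 2R` bounds the nonlinear term by `2c(2R)^β ‖w‖²`. Hence
`d/dt ‖w‖² ≤ 2 L₁(2R) ‖w‖²`, and Grönwall's inequality for `‖w‖²` gives the claim. -/

open Complex ComplexConjugate Set

def latticeLaplacian (x : ℤ → ℂ) (n : ℤ) : ℂ := x (n - 1) - 2 * x n + x (n + 1)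

theorem lp.hasSum_norm_sq {ι : Type*} {E : ι → Type*} [∀ i, NormedAddCommGroup (E i)]
    (x : lp E 2) : HasSum (fun i => ‖x i‖ ^ 2) (‖x‖ ^ 2) := by
  simpa using lp.hasSum_norm (by norm_num : 0 < ENNReal.toReal 2) x

/-- The sum telescopes: the imaginary part of `conj (x n) * x (n + 1)` cancels against that of
`conj (x (n + 1)) * x n` from the next site. -/
theorem hasSum_im_conj_mul_latticeLaplacian (x : lp (fun _ : ℤ => ℂ) 2) :
    HasSum (fun n => (conj (x n) * latticeLaplacian x n).im) 0 := by
  set a : ℤ → ℝ := fun n => (conj (x n) * x (n + 1)).im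
  have hsq := lp.hasSum_norm_sq x
  have ha : Summable a := by
    refine Summable.of_norm_bounded
      ((hsq.summable.add ((Equiv.addRight (1 : ℤ)).summable_iff.2 hsq.summable)).div_const 2)
      fun n => ?_
    have him : ‖a n‖ ≤ ‖x n‖ * ‖x (n + 1)‖ := by
      simpa only [Real.norm_eq_abs, norm_mul, RCLike.norm_conj] using
        abs_im_le_norm (conj (x n) * x (n + 1))
    have := two_mul_le_add_sq ‖x n‖ ‖x (n + 1)‖
    simp only [Function.comp_apply, Equiv.coe_addRight]
    linarith
  have hterm : ∀ n, (conj (x n) * latticeLaplacian x n).im = a n - a (n - 1) := by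
    intro n
    simp only [a, latticeLaplacian, sub_add_cancel, mul_add, mul_sub, add_im, sub_im, mul_im,
      mul_re, conj_re, conj_im, re_ofNat, im_ofNat]
    ring
  simp_rw [hterm]
  simpa using ha.hasSum.sub ((Equiv.subRight (1 : ℤ)).hasSum_iff.2 ha.hasSum)

theorem inner_le_of_apply_eq_I_mul_latticeLaplacian {κ δ M : ℝ}
    {w w' : lp (fun _ : ℤ => ℂ) 2} {f : ℤ → ℂ} (hf : ∀ n, ‖f n‖ ≤ M * ‖w n‖)
    (hw' : ∀ n, w' n = I * κ * latticeLaplacian w n - δ * w n + I * f n) :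
    inner ℝ w w' ≤ (M - δ) * ‖w‖ ^ 2 := by
  have hinner : HasSum (fun n => (w' n * conj (w n)).re) (inner ℝ w w') := by
    simpa only [Complex.inner] using lp.hasSum_inner (𝕜 := ℝ) w w'
  have hbound := ((hasSum_im_conj_mul_latticeLaplacian w).mul_left (-κ)).add
    ((lp.hasSum_norm_sq w).mul_left (M - δ))
  rw [mul_zero, zero_add] at hbound
  refine hasSum_le (fun n => ?_) hinner hbound
  have hsplit : (w' n * conj (w n)).re =
      -κ * (conj (w n) * latticeLaplacian w n).im - δ * ‖w n‖ ^ 2 - (conj (w n) * f n).im := by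
    rw [hw' n, Complex.sq_norm, normSq_apply]
    simp only [add_mul, sub_mul, add_re, sub_re, mul_re, mul_im, I_re, I_im, ofReal_re,
      ofReal_im, conj_re, conj_im]
    ring
  have hnonlin : -(conj (w n) * f n).im ≤ M * ‖w n‖ ^ 2 := by
    have h := (neg_le_abs _).trans (abs_im_le_norm (conj (w n) * f n))
    rw [norm_mul, RCLike.norm_conj] at h
    nlinarith [mul_le_mul_of_nonneg_left (hf n) (norm_nonneg (w n))]
  rw [hsplit]
  linarith

theorem norm_le_exp_mul_norm_of_inner_deriv_le {E : Type*} [NormedAddCommGroup E]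
    [InnerProductSpace ℝ E] {w w' : ℝ → E} {K a b : ℝ}
    (hw : ∀ t ∈ Icc a b, HasDerivAt w (w' t) t)
    (hK : ∀ t ∈ Icc a b, inner ℝ (w t) (w' t) ≤ K * ‖w t‖ ^ 2) :
    ∀ t ∈ Icc a b, ‖w t‖ ≤ Real.exp (K * (t - a)) * ‖w a‖ := by
  have hsq : ∀ t ∈ Icc a b, HasDerivAt (‖w ·‖ ^ 2) (2 * inner ℝ (w t) (w' t)) t :=
    fun t ht => (hw t ht).norm_sq
  have hgron := le_gronwallBound_of_liminf_deriv_right_le (δ := ‖w a‖ ^ 2) (K := 2 * K) (ε := 0)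
    (fun t ht => (hsq t ht).continuousAt.continuousWithinAt)
    (fun t ht r hr => by
      simpa only [slope_def_field, div_eq_inv_mul] using
        (hsq t (Ico_subset_Icc_self ht)).hasDerivWithinAt.liminf_right_slope_le hr)
    le_rfl
    (fun t ht => by linarith [hK t (Ico_subset_Icc_self ht)])
  intro t ht
  have hsq_le : ‖w t‖ ^ 2 ≤ (Real.exp (K * (t - a)) * ‖w a‖) ^ 2 := by
    calc ‖w t‖ ^ 2 ≤ ‖w a‖ ^ 2 * Real.exp (2 * K * (t - a)) := by
          simpa only [gronwallBound_ε0] using hgron t ht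
      _ = (Real.exp (K * (t - a)) * ‖w a‖) ^ 2 := by
          rw [mul_pow, ← Real.exp_nat_mul]; push_cast; ring_nf
  exact (sq_le_sq₀ (norm_nonneg _) (by positivity)).1 hsq_le

theorem norm_sub_le_of_norm_le {E F : Type*} [SeminormedAddCommGroup E]
    [SeminormedAddCommGroup F] {f : E → F} {c β r : ℝ} (hc : 0 ≤ c) (hβ : 0 ≤ β)
    (hf : ∀ z₁ z₂ : E, ‖f z₁ - f z₂‖ ≤ c * (‖z₁‖ ^ β + ‖z₂‖ ^ β) * ‖z₁ - z₂‖)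
    {z₁ z₂ : E} (h₁ : ‖z₁‖ ≤ r) (h₂ : ‖z₂‖ ≤ r) :
    ‖f z₁ - f z₂‖ ≤ 2 * c * r ^ β * ‖z₁ - z₂‖ := by
  calc ‖f z₁ - f z₂‖ ≤ c * (‖z₁‖ ^ β + ‖z₂‖ ^ β) * ‖z₁ - z₂‖ := hf z₁ z₂
    _ ≤ c * (r ^ β + r ^ β) * ‖z₁ - z₂‖ := by gcongr
    _ = 2 * c * r ^ β * ‖z₁ - z₂‖ := by ring

theorem stmt_3_general (ε δ : ℝ) (hδ : 0 ≤ δ) (g : lp (fun _ : ℤ => ℂ) 2)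
    (F : ℂ → ℂ) (c β : ℝ) (hc : 0 < c) (hβ : 0 ≤ β)
    (hF : ∀ z₁ z₂ : ℂ, ‖F z₁ - F z₂‖ ≤
      c * (‖z₁‖ ^ β + ‖z₂‖ ^ β) * ‖z₁ - z₂‖)
    (T R : ℝ)
    (u u' v v' : ℝ → lp (fun _ : ℤ => ℂ) 2)
    (hu : ∀ t ∈ Set.Icc (0:ℝ) T, HasDerivAt u (u' t) t)
    (hueq : ∀ t ∈ Set.Icc (0:ℝ) T, ∀ n : ℤ,
      Complex.I * u' t n + (1/ε : ℂ) * (u t (n-1) - 2 * u t n + u t (n+1))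
        + Complex.I * δ * u t n + F (u t n) = g n)
    (hv : ∀ t ∈ Set.Icc (0:ℝ) T, HasDerivAt v (v' t) t)
    (hveq : ∀ t ∈ Set.Icc (0:ℝ) T, ∀ n : ℤ,
      Complex.I * v' t n + (1/ε : ℂ) * (v t (n-1) - 2 * v t n + v t (n+1))
        + Complex.I * δ * v t n + F (v t n) = g n)
    (hubd : ∀ t ∈ Set.Icc (0:ℝ) T, ‖u t‖ ≤ 2 * R)
    (hvbd : ∀ t ∈ Set.Icc (0:ℝ) T, ‖v t‖ ≤ 2 * R) :
    ∀ t ∈ Set.Icc (0:ℝ) T,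
      ‖u t - v t‖ ≤ Real.exp ((δ + 2 * c * (2 * R) ^ β) * t) * ‖u 0 - v 0‖ := by
  intro t ht
  have hdiff : ∀ s ∈ Icc 0 T, HasDerivAt (fun s => u s - v s) (u' s - v' s) s :=
    fun s hs => (hu s hs).sub (hv s hs)
  refine (norm_le_exp_mul_norm_of_inner_deriv_le (K := δ + 2 * c * (2 * R) ^ β) hdiff
    (fun s hs => ?_) t ht).trans_eq (by rw [sub_zero])
  have hF_diff : ∀ n, ‖F (u s n) - F (v s n)‖ ≤ 2 * c * (2 * R) ^ β * ‖(u s - v s) n‖ :=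
    fun n => norm_sub_le_of_norm_le hc.le hβ hF
      ((lp.norm_apply_le_norm two_ne_zero _ n).trans (hubd s hs))
      ((lp.norm_apply_le_norm two_ne_zero _ n).trans (hvbd s hs))
  have hdiff_eq : ∀ n, (u' s - v' s) n = I * (1 / ε : ℝ) * latticeLaplacian (u s - v s) n
      - δ * (u s - v s) n + I * (F (u s n) - F (v s n)) := fun n => by
    simp only [latticeLaplacian, lp.coeFn_sub, Pi.sub_apply]
    push_cast
    linear_combination (-I) * (hueq s hs n - hveq s hs n)
      + (u' s n - v' s n + δ * (u s n - v s n)) * I_mul_I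
  calc inner ℝ (u s - v s) (u' s - v' s)
      ≤ (2 * c * (2 * R) ^ β - δ) * ‖u s - v s‖ ^ 2 :=
      inner_le_of_apply_eq_I_mul_latticeLaplacian hF_diff hdiff_eq
    _ ≤ (δ + 2 * c * (2 * R) ^ β) * ‖u s - v s‖ ^ 2 := by
      gcongr
      linarith

/-- Continuous dependence: two solutions of the DNLS equation staying in
the ball of radius `2R` satisfy `‖u(t) − v(t)‖ ≤ exp(L₁(2R) t) ‖u(0) − v(0)‖` with
`L₁(2R) = δ + 2c(2R)^β`. -/
theorem stmt_3 (ε δ : ℝ) (hε : 0 < ε) (hδ : 0 ≤ δ) (g : lp (fun _ : ℤ => ℂ) 2)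
    (F : ℂ → ℂ) (c β : ℝ) (hc : 0 < c) (hβ : 0 ≤ β) (hF0 : F 0 = 0)
    (hF : ∀ z₁ z₂ : ℂ, ‖F z₁ - F z₂‖ ≤
      c * (‖z₁‖ ^ β + ‖z₂‖ ^ β) * ‖z₁ - z₂‖)
    (T R : ℝ) (hT : 0 ≤ T) (hR : 0 < R)
    (u u' v v' : ℝ → lp (fun _ : ℤ => ℂ) 2)
    (hu : ∀ t ∈ Set.Icc (0:ℝ) T, HasDerivAt u (u' t) t)
    (hu' : ContinuousOn u' (Set.Icc (0:ℝ) T))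
    (hueq : ∀ t ∈ Set.Icc (0:ℝ) T, ∀ n : ℤ,
      Complex.I * u' t n + (1/ε : ℂ) * (u t (n-1) - 2 * u t n + u t (n+1))
        + Complex.I * δ * u t n + F (u t n) = g n)
    (hv : ∀ t ∈ Set.Icc (0:ℝ) T, HasDerivAt v (v' t) t)
    (hv' : ContinuousOn v' (Set.Icc (0:ℝ) T))
    (hveq : ∀ t ∈ Set.Icc (0:ℝ) T, ∀ n : ℤ,
      Complex.I * v' t n + (1/ε : ℂ) * (v t (n-1) - 2 * v t n + v t (n+1))
        + Complex.I * δ * v t n + F (v t n) = g n)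
    (hubd : ∀ t ∈ Set.Icc (0:ℝ) T, ‖u t‖ ≤ 2 * R)
    (hvbd : ∀ t ∈ Set.Icc (0:ℝ) T, ‖v t‖ ≤ 2 * R) :
    ∀ t ∈ Set.Icc (0:ℝ) T,
      ‖u t - v t‖ ≤ Real.exp ((δ + 2 * c * (2 * R) ^ β) * t) * ‖u 0 - v 0‖ :=
  stmt_3_general ε δ hδ g F c β hc hβ hF T R u u' v v' hu hueq hv hveq hubd hvbd
end

section
/- Let ε > 0 and 0 ≤ σ < ∞. For every u₀ ∈ ℓ² there exists a unique continuously differentiable function u : [0, ∞) → ℓ² with u(0) = u₀ satisfying, for all t ≥ 0 and all n ∈ ℤ, i u̇_n(t) + (1/ε)(u_{n−1}(t) − 2u_n(t) + u_{n+1}(t)) + |u_n(t)|^{2σ}u_n(t) = 0; that is, the conservative power-nonlinearity DNLS equation is globally well posed in ℓ² for every power σ ≥ 0 and every initial datum, with no restriction on the size of the data. -/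
/-!
Clipping the nonlinearity at the level `R = ‖u₀‖`, i.e. replacing `|z|^(2σ) z` by
`min(|z|, R)^(2σ) z`, gives a globally Lipschitz map of `ℂ`, hence (together with the bounded
discrete Laplacian) a globally Lipschitz vector field on `ℓ²(ℤ)`, whose solutions exist for all
times. The `ℓ²` norm is conserved along this flow: the Laplacian is symmetric and the nonlinearity
is multiplication by a real sequence, so `Re ⟪u, u̇⟫ = Re ⟪u, i A u⟫ = 0`. Therefore
`|uₙ(t)| ≤ ‖u(t)‖ = R`, the clipping is never active, and the solution of the clipped equation
solves the original one. Conversely any solution of the original equation conserves its norm as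
well, so it solves the clipped Lipschitz equation and coincides with `u` by uniqueness.
-/

open scoped NNReal ENNReal lp
open Set Filter Topology

section IntegralCurve

variable {E : Type*} [NormedAddCommGroup E] [NormedSpace ℝ E] {v : ℝ → E → E}
  {γ γ₁ γ₂ : ℝ → E} {s s₁ s₂ : Set ℝ} {K : ℝ≥0} {g : E → E}

theorem IsIntegralCurveOn.congr (h : IsIntegralCurveOn γ v s) (heq : EqOn γ₁ γ s) :
    IsIntegralCurveOn γ₁ v s := fun t ht => by
  rw [heq ht]
  exact (h t ht).congr heq (heq ht)

theorem IsIntegralCurveOn.union (h₁ : IsIntegralCurveOn γ v s₁) (h₂ : IsIntegralCurveOn γ v s₂)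
    (hs₁ : IsOpen s₁) (hs₂ : IsOpen s₂) : IsIntegralCurveOn γ v (s₁ ∪ s₂) := by
  rintro t (ht | ht)
  · exact ((h₁ t ht).hasDerivAt (hs₁.mem_nhds ht)).hasDerivWithinAt
  · exact ((h₂ t ht).hasDerivAt (hs₂.mem_nhds ht)).hasDerivWithinAt

theorem IsIntegralCurveOn.piecewise [DecidablePred (· ∈ s₁)] (h₁ : IsIntegralCurveOn γ₁ v s₁)
    (h₂ : IsIntegralCurveOn γ₂ v s₂) (hs₁ : IsOpen s₁) (hs₂ : IsOpen s₂)
    (heq : EqOn γ₁ γ₂ (s₁ ∩ s₂)) : IsIntegralCurveOn (s₁.piecewise γ₁ γ₂) v (s₁ ∪ s₂) := by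
  have h₂' : EqOn (s₁.piecewise γ₁ γ₂) γ₂ s₂ := fun t ht => by
    by_cases ht₁ : t ∈ s₁
    · rw [piecewise_eq_of_mem _ _ _ ht₁, heq ⟨ht₁, ht⟩]
    · rw [piecewise_eq_of_notMem _ _ _ ht₁]
  exact (h₁.congr (piecewise_eqOn _ _ _)).union (h₂.congr h₂') hs₁ hs₂

theorem IsIntegralCurveOn.eqOn_Ioo_inter (hv : ∀ t, LipschitzWith K (v t)) {a₁ b₁ a₂ b₂ t₀ : ℝ}
    (h₁ : IsIntegralCurveOn γ₁ v (Ioo a₁ b₁)) (h₂ : IsIntegralCurveOn γ₂ v (Ioo a₂ b₂))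
    (ht₀ : t₀ ∈ Ioo a₁ b₁ ∩ Ioo a₂ b₂) (h : γ₁ t₀ = γ₂ t₀) :
    EqOn γ₁ γ₂ (Ioo a₁ b₁ ∩ Ioo a₂ b₂) := by
  have hderiv : ∀ γ : ℝ → E, IsIntegralCurveOn γ v (Ioo a₁ b₁ ∩ Ioo a₂ b₂) →
      ∀ t ∈ Ioo (max a₁ a₂) (min b₁ b₂), HasDerivAt γ (v t (γ t)) t ∧ γ t ∈ univ :=
    fun γ hγ t ht => by
      rw [← Ioo_inter_Ioo] at ht
      exact ⟨(hγ t ht).hasDerivAt ((isOpen_Ioo.inter isOpen_Ioo).mem_nhds ht), trivial⟩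
  rw [Ioo_inter_Ioo] at ht₀ ⊢
  exact ODE_solution_unique_of_mem_Ioo (fun t _ => (hv t).lipschitzOnWith) ht₀
    (hderiv γ₁ (h₁.mono inter_subset_left)) (hderiv γ₂ (h₂.mono inter_subset_right)) h

theorem IsIntegralCurveOn.exists_extension (hv : ∀ t, LipschitzWith K (v t)) {a b c δ : ℝ}
    (hγ : IsIntegralCurveOn γ v (Ioo a b)) (hc : c ∈ Ioo a b) (hδ : 0 < δ)
    (hloc : ∀ x, ∃ η, η c = x ∧ IsIntegralCurveOn η v (Ioo (c - δ) (c + δ))) :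
    ∃ γ', EqOn γ' γ (Ioo a b) ∧ IsIntegralCurveOn γ' v (Ioo a b ∪ Ioo (c - δ) (c + δ)) := by
  classical
  obtain ⟨η, hηc, hη⟩ := hloc (γ c)
  have hc' : c ∈ Ioo (c - δ) (c + δ) := ⟨by linarith, by linarith⟩
  exact ⟨(Ioo a b).piecewise γ η, piecewise_eqOn _ _ _,
    hγ.piecewise hη isOpen_Ioo isOpen_Ioo (hγ.eqOn_Ioo_inter hv hη ⟨hc, hc'⟩ hηc.symm)⟩

theorem LipschitzWith.eqOn_Ici_of_hasDerivAt (hg : LipschitzWith K g) {f₁ f₂ : ℝ → E}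
    (h₁ : ∀ t ∈ Ici (0 : ℝ), HasDerivAt f₁ (g (f₁ t)) t)
    (h₂ : ∀ t ∈ Ici (0 : ℝ), HasDerivAt f₂ (g (f₂ t)) t) (h₀ : f₁ 0 = f₂ 0) :
    EqOn f₁ f₂ (Ici 0) := fun _ ht =>
  ODE_solution_unique (v := fun _ => g) (fun _ => hg)
    (HasDerivAt.continuousOn fun s hs => h₁ s hs.1)
    (fun s hs => (h₁ s hs.1).hasDerivWithinAt)
    (HasDerivAt.continuousOn fun s hs => h₂ s hs.1)
    (fun s hs => (h₂ s hs.1).hasDerivWithinAt) h₀ ⟨ht, le_rfl⟩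

variable [CompleteSpace E]

theorem LipschitzWith.exists_isIntegralCurveOn_Ioo_sub_add (hg : LipschitzWith K g) :
    ∃ δ > 0, ∀ (t₀ : ℝ) (x : E), ∃ γ, γ t₀ = x ∧
      IsIntegralCurveOn γ (fun _ => g) (Ioo (t₀ - δ) (t₀ + δ)) := by
  set δ : ℝ := (2 * (K + 1))⁻¹
  refine ⟨δ, by positivity, fun t₀ x => ?_⟩
  -- the ball of radius `a` around `x` is not left before time `δ`, since `K * δ ≤ 1 / 2`
  set a : ℝ≥0 := ⟨2 * δ * ‖g x‖, by positivity⟩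
  have hbound : ∀ y ∈ Metric.closedBall x a, ‖g y‖ ≤ ‖g x‖₊ + K * a := fun y hy => by
    have hgy := norm_le_norm_add_norm_sub' (g y) (g x)
    have hlip := hg.norm_sub_le y x
    have hya := mem_closedBall_iff_norm.1 hy
    push_cast
    nlinarith [K.coe_nonneg]
  have hpl : IsPicardLindelof (fun _ => g) (tmin := t₀ - δ) (tmax := t₀ + δ)
      ⟨t₀, by constructor <;> linarith [show 0 < δ by positivity]⟩ x a 0 (‖g x‖₊ + K * a) K := by
    refine .of_time_independent hbound hg.lipschitzOnWith ?_
    have hKδ : (K : ℝ) * δ ≤ 1 / 2 := by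
      simp only [δ]
      rw [← div_eq_mul_inv, div_le_iff₀ (by positivity)]
      linarith
    have ha : (a : ℝ) = 2 * δ * ‖g x‖ := rfl
    simp only [add_sub_cancel_left, sub_sub_cancel, max_self, NNReal.coe_add, NNReal.coe_mul,
      coe_nnnorm, NNReal.coe_zero, sub_zero, ha]
    nlinarith [mul_le_mul_of_nonneg_left hKδ (by positivity : (0 : ℝ) ≤ ‖g x‖ * δ)]
  obtain ⟨γ, hγ₀, hγ⟩ := hpl.exists_eq_forall_mem_Icc_hasDerivWithinAt₀
  exact ⟨γ, hγ₀, fun t ht => (hγ t (Ioo_subset_Icc_self ht)).mono Ioo_subset_Icc_self⟩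

theorem LipschitzWith.exists_isIntegralCurveOn_Ioo (hg : LipschitzWith K g) (x : E) (T : ℝ) :
    ∃ γ, γ 0 = x ∧ IsIntegralCurveOn γ (fun _ => g) (Ioo (-T) T) := by
  obtain ⟨δ, hδ, hloc⟩ := hg.exists_isIntegralCurveOn_Ioo_sub_add
  have hv : ∀ _ : ℝ, LipschitzWith K g := fun _ => hg
  suffices H : ∀ k : ℕ, ∃ γ, γ 0 = x ∧
      IsIntegralCurveOn γ (fun _ => g) (Ioo (-(δ + k * (δ / 2))) (δ + k * (δ / 2))) by
    obtain ⟨k, hk⟩ := exists_nat_ge (T / (δ / 2))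
    obtain ⟨γ, hγ₀, hγ⟩ := H k
    have hT : T ≤ δ + k * (δ / 2) := by
      rw [div_le_iff₀ (by positivity)] at hk
      linarith
    exact ⟨γ, hγ₀, hγ.mono (Ioo_subset_Ioo (neg_le_neg hT) hT)⟩
  intro k
  induction k with
  | zero => simpa using hloc 0 x
  | succ k ih =>
    obtain ⟨γ, hγ₀, hγ⟩ := ih
    set A := δ + k * (δ / 2)
    have hA : δ ≤ A := le_add_of_nonneg_right (by positivity)
    obtain ⟨γ₁, hγ₁γ, hγ₁⟩ := hγ.exists_extension hv (c := A - δ / 2)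
      ⟨by linarith, by linarith⟩ hδ (hloc _)
    have hγ₁' : IsIntegralCurveOn γ₁ (fun _ => g) (Ioo (-A) (A + δ / 2)) := by
      refine hγ₁.mono fun t ht => ?_
      rcases lt_or_ge t A with h | h
      exacts [Or.inl ⟨ht.1, h⟩, Or.inr ⟨by linarith, by linarith [ht.2]⟩]
    obtain ⟨γ₂, hγ₂γ₁, hγ₂⟩ := hγ₁'.exists_extension hv (c := -(A - δ / 2))
      ⟨by linarith, by linarith⟩ hδ (hloc _)
    refine ⟨γ₂, ?_, hγ₂.mono fun t ht => ?_⟩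
    · rw [hγ₂γ₁ ⟨by linarith, by linarith⟩, hγ₁γ ⟨by linarith, by linarith⟩, hγ₀]
    · rw [Nat.cast_succ, show δ + ((k : ℝ) + 1) * (δ / 2) = A + δ / 2 by simp only [A]; ring]
        at ht
      rcases lt_or_ge (-A) t with h | h
      exacts [Or.inl ⟨h, by linarith [ht.2]⟩, Or.inr ⟨by linarith [ht.1], by linarith⟩]

theorem LipschitzWith.exists_isIntegralCurve (hg : LipschitzWith K g) (x : E) :
    ∃ γ, γ 0 = x ∧ IsIntegralCurve γ (fun _ => g) := by
  choose γ hγ₀ hγ using fun n : ℕ => hg.exists_isIntegralCurveOn_Ioo x (n + 1)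
  have h₀ : ∀ n : ℕ, (0 : ℝ) ∈ Ioo (-(n + 1 : ℝ)) (n + 1) := fun n =>
    ⟨by linarith [n.cast_nonneg (α := ℝ)], by positivity⟩
  have hagree : ∀ m n : ℕ,
      EqOn (γ m) (γ n) (Ioo (-(m + 1 : ℝ)) (m + 1) ∩ Ioo (-(n + 1 : ℝ)) (n + 1)) :=
    fun m n => (hγ m).eqOn_Ioo_inter (fun _ => hg) (hγ n) ⟨h₀ m, h₀ n⟩ (by rw [hγ₀, hγ₀])
  set N : ℝ → ℕ := fun t => ⌈|t|⌉₊
  have hN : ∀ t, t ∈ Ioo (-(N t + 1 : ℝ)) (N t + 1) := fun t =>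
    abs_lt.1 ((Nat.le_ceil |t|).trans_lt (lt_add_one _))
  refine ⟨fun t => γ (N t) t, hγ₀ _, fun t => ?_⟩
  have hnhds := Ioo_mem_nhds (hN t).1 (hN t).2
  exact ((hγ (N t) t (hN t)).hasDerivAt hnhds).congr_of_eventuallyEq
    (eventually_of_mem hnhds fun s hs => hagree _ _ ⟨hN s, hs⟩)

end IntegralCurve

theorem norm_eq_norm_zero_of_re_inner_eq_zero {𝕜 F : Type*} [RCLike 𝕜] [NormedAddCommGroup F]
    [InnerProductSpace 𝕜 F] [NormedSpace ℝ F] [IsScalarTower ℝ 𝕜 F] {f f' : ℝ → F}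
    (hf : ∀ t ∈ Ici (0 : ℝ), HasDerivAt f (f' t) t)
    (hre : ∀ t ∈ Ici (0 : ℝ), RCLike.re (inner 𝕜 (f t) (f' t)) = 0) :
    ∀ t ∈ Ici (0 : ℝ), ‖f t‖ = ‖f 0‖ := by
  have hderiv : ∀ t ∈ Ici (0 : ℝ), HasDerivAt (fun s => ‖f s‖ ^ 2) 0 t := fun t ht => by
    have := (RCLike.reCLM.hasFDerivAt).comp_hasDerivAt t ((hf t ht).inner 𝕜 (hf t ht))
    simp only [Function.comp_def, RCLike.reCLM_apply, map_add, inner_re_symm (f' t), hre t ht,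
      add_zero, ← norm_sq_eq_re_inner] at this
    exact this
  intro t ht
  have := constant_of_has_deriv_right_zero
    (fun s hs => (hderiv s hs.1).continuousAt.continuousWithinAt)
    (fun s hs => (hderiv s hs.1).hasDerivWithinAt) t ⟨ht, le_rfl⟩
  exact (sq_eq_sq₀ (norm_nonneg _) (norm_nonneg _)).1 this

section Reindex

variable {α β E : Type*} [NormedAddCommGroup E] {p : ℝ≥0∞}

theorem Memℓp.comp_equiv {f : α → E} (hf : Memℓp f p) (e : β ≃ α) : Memℓp (f ∘ e) p := by
  obtain rfl | rfl | hp := p.trichotomy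
  · rw [memℓp_zero_iff] at hf ⊢
    exact hf.preimage e.injective.injOn
  · rw [memℓp_infty_iff] at hf ⊢
    exact hf.mono (range_comp_subset_range e (fun a => ‖f a‖))
  · rw [memℓp_gen_iff hp] at hf ⊢
    exact e.summable_iff.2 hf

variable (𝕜 : Type*) [NormedField 𝕜] [NormedSpace 𝕜 E] [Fact (1 ≤ p)]

noncomputable def lp.compEquivₗᵢ (e : β ≃ α) :
    lp (fun _ : α => E) p →ₗᵢ[𝕜] lp (fun _ : β => E) p where
  toFun f := ⟨f ∘ e, (lp.memℓp f).comp_equiv e⟩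
  map_add' _ _ := rfl
  map_smul' _ _ := rfl
  norm_map' f := by
    obtain rfl | rfl | hp := p.trichotomy
    · exact absurd (Fact.out : (1 : ℝ≥0∞) ≤ 0) (by norm_num)
    · exact (lp.norm_eq_ciSup _).trans (e.iSup_comp (g := fun a => ‖f a‖))
    · rw [lp.norm_eq_tsum_rpow hp, lp.norm_eq_tsum_rpow hp]
      exact congrArg (· ^ _) (e.tsum_eq (fun a => ‖f a‖ ^ p.toReal))

@[simp]
theorem lp.compEquivₗᵢ_apply (e : β ≃ α) (f : lp (fun _ : α => E) p) (b : β) :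
    lp.compEquivₗᵢ 𝕜 e f b = f (e b) := rfl

end Reindex

theorem lp.inner_compEquivₗᵢ {α β 𝕜 : Type*} [RCLike 𝕜] (e : β ≃ α) (f : ℓ²(β, 𝕜))
    (g : ℓ²(α, 𝕜)) : inner 𝕜 f (lp.compEquivₗᵢ 𝕜 e g) = inner 𝕜 (lp.compEquivₗᵢ 𝕜 e.symm f) g := by
  simp only [lp.inner_eq_tsum, lp.compEquivₗᵢ_apply]
  rw [← e.tsum_eq]
  simp

theorem LipschitzWith.exists_lipschitzWith_lp_comp {α E F : Type*} [NormedAddCommGroup E]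
    [NormedSpace ℝ E] [NormedAddCommGroup F] {p : ℝ≥0∞} [Fact (1 ≤ p)] {φ : E → F} {K : ℝ≥0}
    (hφ : LipschitzWith K φ) (h₀ : φ 0 = 0) :
    ∃ Φ : lp (fun _ : α => E) p → lp (fun _ : α => F) p,
      (∀ u a, Φ u a = φ (u a)) ∧ LipschitzWith K Φ := by
  have hmem : ∀ u : lp (fun _ : α => E) p, Memℓp (fun a => φ (u a)) p := fun u =>
    ((lp.memℓp u).norm.const_mul (K : ℝ)).mono fun a => by
      simpa [h₀] using hφ.norm_sub_le (u a) 0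
  refine ⟨fun u => ⟨_, hmem u⟩, fun _ _ => rfl, LipschitzWith.of_dist_le_mul fun u v => ?_⟩
  rw [dist_eq_norm, dist_eq_norm, ← Real.norm_of_nonneg K.coe_nonneg, ← norm_smul]
  refine lp.norm_mono (zero_lt_one.trans_le Fact.out).ne' fun a => ?_
  simpa only [lp.coeFn_sub, lp.coeFn_smul, Pi.sub_apply, Pi.smul_apply, norm_smul,
    Real.norm_of_nonneg K.coe_nonneg] using hφ.norm_sub_le (u a) (v a)

theorem rpow_sub_rpow_mul_le {p R a b : ℝ} (hp : 0 ≤ p) (hb : 0 ≤ b) (hba : b ≤ a)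
    (haR : a ≤ R) : (a ^ p - b ^ p) * b ≤ p * R ^ p * (a - b) := by
  have hderiv : ∀ x ∈ Ioo b a, HasDerivAt (fun t : ℝ => t ^ p * b) (p * x ^ (p - 1) * b) x :=
    fun x hx => (Real.hasDerivAt_rpow_const (Or.inl (hb.trans_lt hx.1).ne')).mul_const b
  have hbound : ∀ x ∈ Ioo b a, deriv (fun t : ℝ => t ^ p * b) x ≤ p * R ^ p := by
    intro x hx
    have hx0 : 0 < x := hb.trans_lt hx.1
    -- `b ≤ x` tames the singularity of `x ^ (p - 1)` at `0`
    calc deriv (fun t : ℝ => t ^ p * b) x = p * (x ^ (p - 1) * b) := by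
          rw [(hderiv x hx).deriv]; ring
      _ ≤ p * (x ^ (p - 1) * x) := by gcongr; exact hx.1.le
      _ = p * x ^ p := by rw [← Real.rpow_add_one hx0.ne']; norm_num
      _ ≤ p * R ^ p := by gcongr; exact hx.2.le.trans haR
  rw [← interior_Icc] at hderiv hbound
  have := (convex_Icc b a).image_sub_le_mul_sub_of_deriv_le (f := fun t : ℝ => t ^ p * b)
    ((Real.continuous_rpow_const hp).mul continuous_const).continuousOn
    (fun x hx => (hderiv x hx).differentiableAt.differentiableWithinAt) hbound
    b (left_mem_Icc.2 hba) a (right_mem_Icc.2 hba) hba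
  linarith

noncomputable def clippedPow (p R : ℝ) (z : ℂ) : ℂ := ((min ‖z‖ R ^ p : ℝ) : ℂ) * z

theorem norm_clippedPow_sub_le {p R : ℝ} (hp : 0 ≤ p) (hR : 0 ≤ R) (z w : ℂ) :
    ‖clippedPow p R z - clippedPow p R w‖ ≤ (p + 1) * R ^ p * ‖z - w‖ := by
  wlog hwz : ‖w‖ ≤ ‖z‖ generalizing z w
  · rw [norm_sub_rev, norm_sub_rev z]
    exact this w z (le_of_not_ge hwz)
  set A := min ‖z‖ R
  set B := min ‖w‖ R
  have hB : 0 ≤ B := le_min (norm_nonneg w) hR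
  have hBA : B ≤ A := min_le_min_right R hwz
  have hAR : A ≤ R := min_le_right _ _
  have hsplit : clippedPow p R z - clippedPow p R w
      = ((A ^ p : ℝ) : ℂ) * (z - w) + ((A ^ p - B ^ p : ℝ) : ℂ) * w := by
    simp only [clippedPow, A, B]; push_cast; ring
  have hApR : A ^ p ≤ R ^ p := Real.rpow_le_rpow (hB.trans hBA) hAR hp
  have hBpA : B ^ p ≤ A ^ p := Real.rpow_le_rpow hB hBA hp
  -- only the unclipped case `‖w‖ ≤ R` contributes, and there `B = ‖w‖`
  have hdiff : (A ^ p - B ^ p) * ‖w‖ ≤ p * R ^ p * ‖z - w‖ := by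
    rcases le_or_gt ‖w‖ R with hwR | hRw
    · have hBw : B = ‖w‖ := min_eq_left hwR
      calc (A ^ p - B ^ p) * ‖w‖ = (A ^ p - B ^ p) * B := by rw [hBw]
        _ ≤ p * R ^ p * (A - B) := rpow_sub_rpow_mul_le hp hB hBA hAR
        _ ≤ p * R ^ p * ‖z - w‖ := by
          gcongr
          linarith [min_le_left ‖z‖ R, norm_sub_norm_le z w]
    · have hAB : A = B := by
        simp only [A, B, min_eq_right hRw.le, min_eq_right (hRw.le.trans hwz)]
      rw [hAB, sub_self, zero_mul]
      positivity
  calc ‖clippedPow p R z - clippedPow p R w‖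
      ≤ A ^ p * ‖z - w‖ + (A ^ p - B ^ p) * ‖w‖ := by
        rw [hsplit]
        refine (norm_add_le _ _).trans_eq ?_
        rw [norm_mul, norm_mul, Complex.norm_real, Complex.norm_real, Real.norm_of_nonneg
          (Real.rpow_nonneg (hB.trans hBA) p), Real.norm_of_nonneg (sub_nonneg.2 hBpA)]
    _ ≤ R ^ p * ‖z - w‖ + p * R ^ p * ‖z - w‖ := by gcongr
    _ = (p + 1) * R ^ p * ‖z - w‖ := by ring

theorem lipschitzWith_clippedPow {p R : ℝ} (hp : 0 ≤ p) (hR : 0 ≤ R) :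
    LipschitzWith ((p + 1) * R ^ p).toNNReal (clippedPow p R) :=
  LipschitzWith.of_dist_le_mul fun z w => by
    rw [dist_eq_norm, dist_eq_norm, Real.coe_toNNReal _ (by positivity)]
    exact norm_clippedPow_sub_le hp hR z w

@[simp]
theorem clippedPow_zero (p R : ℝ) : clippedPow p R 0 = 0 := by
  simp [clippedPow]

noncomputable def latticeShift (k : ℤ) : ℓ²(ℤ, ℂ) →ₗᵢ[ℂ] ℓ²(ℤ, ℂ) :=
  lp.compEquivₗᵢ ℂ (Equiv.addRight k)

@[simp]
theorem latticeShift_apply (k : ℤ) (u : ℓ²(ℤ, ℂ)) (n : ℤ) : latticeShift k u n = u (n + k) := rfl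

theorem inner_latticeShift (k : ℤ) (u v : ℓ²(ℤ, ℂ)) :
    inner ℂ u (latticeShift k v) = inner ℂ (latticeShift (-k) u) v := by
  rw [latticeShift, lp.inner_compEquivₗᵢ]
  rfl

noncomputable def discreteLaplacian : ℓ²(ℤ, ℂ) →L[ℂ] ℓ²(ℤ, ℂ) :=
  (latticeShift (-1)).toContinuousLinearMap - (2 : ℂ) • ContinuousLinearMap.id ℂ _ +
    (latticeShift 1).toContinuousLinearMap

theorem discreteLaplacian_apply (u : ℓ²(ℤ, ℂ)) (n : ℤ) :
    discreteLaplacian u n = u (n - 1) - 2 * u n + u (n + 1) := by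
  simp only [discreteLaplacian, add_apply, sub_apply, smul_apply, ContinuousLinearMap.id_apply,
    LinearIsometry.coe_toContinuousLinearMap, lp.coeFn_add, lp.coeFn_sub, lp.coeFn_smul,
    Pi.add_apply, Pi.sub_apply, Pi.smul_apply, smul_eq_mul, latticeShift_apply]
  rw [← sub_eq_add_neg]

theorem isSymmetric_discreteLaplacian :
    (discreteLaplacian : ℓ²(ℤ, ℂ) →ₗ[ℂ] ℓ²(ℤ, ℂ)).IsSymmetric := fun u v => by
  simp only [discreteLaplacian, ContinuousLinearMap.coe_coe, add_apply, sub_apply,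
    smul_apply, ContinuousLinearMap.id_apply,
    LinearIsometry.coe_toContinuousLinearMap, inner_add_left, inner_add_right, inner_sub_left,
    inner_sub_right, inner_smul_left, inner_smul_right, inner_latticeShift _ u, neg_neg]
  simp only [map_ofNat]
  ring

-- `u̇ₙ = dnlsRhs ε c u n` is the DNLS equation solved for `u̇ₙ`, with a real multiplier `c n`
-- in place of `|uₙ|^(2σ)`
noncomputable def dnlsRhs (ε : ℝ) (c : ℤ → ℝ) (u : ℓ²(ℤ, ℂ)) (n : ℤ) : ℂ :=
  Complex.I * ((1 / ε : ℂ) * (u (n - 1) - 2 * u n + u (n + 1)) + (c n : ℂ) * u n)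

theorem I_mul_add_add_eq_zero_iff {ε : ℝ} {c : ℤ → ℝ} {u : ℓ²(ℤ, ℂ)} {n : ℤ} {w : ℂ} :
    Complex.I * w + (1 / ε : ℂ) * (u (n - 1) - 2 * u n + u (n + 1)) + (c n : ℂ) * u n = 0 ↔
      w = dnlsRhs ε c u n := by
  rw [dnlsRhs]
  constructor <;> intro h
  · linear_combination (-Complex.I) * h + w * Complex.I_mul_I
  · linear_combination Complex.I * h +
      ((1 / ε : ℂ) * (u (n - 1) - 2 * u n + u (n + 1)) + (c n : ℂ) * u n) * Complex.I_mul_I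

theorem re_inner_eq_zero_of_eq_dnlsRhs {ε : ℝ} {c : ℤ → ℝ} {u w : ℓ²(ℤ, ℂ)}
    (hw : ⇑w = dnlsRhs ε c u) : RCLike.re (inner ℂ u w) = 0 := by
  set m := (-Complex.I) • w - (1 / ε : ℂ) • discreteLaplacian u
  have hm : ∀ n, m n = (c n : ℂ) * u n := fun n => by
    simp only [m, lp.coeFn_sub, lp.coeFn_smul, Pi.sub_apply, Pi.smul_apply, smul_eq_mul, hw,
      dnlsRhs, discreteLaplacian_apply]
    linear_combination
      (-(1 / ε : ℂ) * (u (n - 1) - 2 * u n + u (n + 1)) - c n * u n) * Complex.I_mul_I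
  have hw' : w = Complex.I • ((1 / ε : ℂ) • discreteLaplacian u + m) := by
    rw [add_sub_cancel, smul_smul]
    simp
  have him : (inner ℂ u m).im = 0 := by
    rw [lp.inner_eq_tsum, Complex.im_tsum (lp.summable_inner u m)]
    have hterm : ∀ n, (inner ℂ (u n) (m n)).im = 0 := fun n => by
      simp only [hm, RCLike.inner_apply, Complex.mul_im, Complex.mul_re, Complex.ofReal_re,
        Complex.ofReal_im, zero_mul, sub_zero, Complex.conj_im, mul_neg, add_zero, Complex.conj_re]
      ring
    simp only [hterm, tsum_zero]
  have hΔ : (inner ℂ u (discreteLaplacian u)).im = 0 :=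
    isSymmetric_discreteLaplacian.im_inner_self_apply u
  rw [hw', inner_smul_right, inner_add_right, inner_smul_right]
  simp [Complex.mul_re, Complex.mul_im, him, hΔ]

theorem exists_lipschitzWith_eq_dnlsRhs (ε : ℝ) {p R : ℝ} (hp : 0 ≤ p) (hR : 0 ≤ R) :
    ∃ (F : ℓ²(ℤ, ℂ) → ℓ²(ℤ, ℂ)) (K : ℝ≥0), LipschitzWith K F ∧
      ∀ u, ⇑(F u) = dnlsRhs ε (fun n => min ‖u n‖ R ^ p) u := by
  obtain ⟨N, hN, hNK⟩ := (lipschitzWith_clippedPow hp hR).exists_lipschitzWith_lp_comp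
    (α := ℤ) (p := 2) (clippedPow_zero p R)
  set L := (1 / ε : ℂ) • discreteLaplacian
  refine ⟨fun u => Complex.I • (L u + N u), _,
    (lipschitzWith_smul Complex.I).comp (L.lipschitz.add hNK), fun u => funext fun n => ?_⟩
  simp only [L, lp.coeFn_add, lp.coeFn_smul, Pi.add_apply, Pi.smul_apply, smul_eq_mul,
    smul_apply, hN, discreteLaplacian_apply, dnlsRhs, clippedPow]

theorem stmt_5_general (ε σ : ℝ) (hσ : 0 ≤ σ) :
    ∀ u₀ : lp (fun _ : ℤ => ℂ) 2,
      ∃ u u' : ℝ → lp (fun _ : ℤ => ℂ) 2,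
        (u 0 = u₀ ∧
          (∀ t ∈ Set.Ici (0:ℝ), HasDerivAt u (u' t) t) ∧
          ContinuousOn u' (Set.Ici (0:ℝ)) ∧
          (∀ t ∈ Set.Ici (0:ℝ), ∀ n : ℤ,
            Complex.I * u' t n + (1/ε : ℂ) * (u t (n-1) - 2 * u t n + u t (n+1))
              + (‖u t n‖ ^ (2 * σ) : ℝ) * u t n = 0)) ∧
        -- uniqueness
        (∀ v v' : ℝ → lp (fun _ : ℤ => ℂ) 2,
          v 0 = u₀ →
          (∀ t ∈ Set.Ici (0:ℝ), HasDerivAt v (v' t) t) →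
          ContinuousOn v' (Set.Ici (0:ℝ)) →
          (∀ t ∈ Set.Ici (0:ℝ), ∀ n : ℤ,
            Complex.I * v' t n + (1/ε : ℂ) * (v t (n-1) - 2 * v t n + v t (n+1))
              + (‖v t n‖ ^ (2 * σ) : ℝ) * v t n = 0) →
          ∀ t ∈ Set.Ici (0:ℝ), v t = u t) := by
  intro u₀
  obtain ⟨F, K, hFK, hF⟩ :=
    exists_lipschitzWith_eq_dnlsRhs ε (by positivity : 0 ≤ 2 * σ) (norm_nonneg u₀)
  have hF_of_norm_le : ∀ v, ‖v‖ ≤ ‖u₀‖ → ⇑(F v) = dnlsRhs ε (fun n => ‖v n‖ ^ (2 * σ)) v :=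
    fun v hv => by
      simp only [hF, min_eq_left ((lp.norm_apply_le_norm two_ne_zero v _).trans hv)]
  obtain ⟨u, hu₀, hu⟩ := hFK.exists_isIntegralCurve u₀
  have hu_norm : ∀ t ∈ Ici (0 : ℝ), ‖u t‖ = ‖u₀‖ := hu₀ ▸
    norm_eq_norm_zero_of_re_inner_eq_zero (𝕜 := ℂ) (fun t _ => hu t)
      (fun t _ => re_inner_eq_zero_of_eq_dnlsRhs (hF (u t)))
  refine ⟨u, fun t => F (u t), ⟨hu₀, fun t _ => hu t,
    (hFK.continuous.comp hu.continuous).continuousOn, fun t ht n => ?_⟩, ?_⟩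
  · exact I_mul_add_add_eq_zero_iff.2 (congrFun (hF_of_norm_le _ (hu_norm t ht).le) n)
  · intro v v' hv₀ hv _ hv_eq
    have hv' : ∀ t ∈ Ici (0 : ℝ), ⇑(v' t) = dnlsRhs ε (fun n => ‖v t n‖ ^ (2 * σ)) (v t) :=
      fun t ht => funext fun n => I_mul_add_add_eq_zero_iff.1 (hv_eq t ht n)
    have hv_norm : ∀ t ∈ Ici (0 : ℝ), ‖v t‖ = ‖u₀‖ := hv₀ ▸
      norm_eq_norm_zero_of_re_inner_eq_zero (𝕜 := ℂ) hv
        (fun t ht => re_inner_eq_zero_of_eq_dnlsRhs (hv' t ht))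
    have hvF : ∀ t ∈ Ici (0 : ℝ), HasDerivAt v (F (v t)) t := fun t ht => by
      have hFv : F (v t) = v' t :=
        lp.ext ((hF_of_norm_le _ (hv_norm t ht).le).trans (hv' t ht).symm)
      exact hFv ▸ hv t ht
    exact hFK.eqOn_Ici_of_hasDerivAt hvF (fun t _ => hu t) (hv₀.trans hu₀.symm)

/-- Global well-posedness in `ℓ²` of the conservative power-nonlinearity
DNLS equation `i u̇ₙ + (1/ε)(uₙ₋₁ − 2uₙ + uₙ₊₁) + |uₙ|^(2σ) uₙ = 0`, for every `σ ≥ 0`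
and every initial datum. -/
theorem stmt_5 (ε σ : ℝ) (hε : 0 < ε) (hσ : 0 ≤ σ) :
    ∀ u₀ : lp (fun _ : ℤ => ℂ) 2,
      ∃ u u' : ℝ → lp (fun _ : ℤ => ℂ) 2,
        (u 0 = u₀ ∧
          (∀ t ∈ Set.Ici (0:ℝ), HasDerivAt u (u' t) t) ∧
          ContinuousOn u' (Set.Ici (0:ℝ)) ∧
          (∀ t ∈ Set.Ici (0:ℝ), ∀ n : ℤ,
            Complex.I * u' t n + (1/ε : ℂ) * (u t (n-1) - 2 * u t n + u t (n+1))
              + (‖u t n‖ ^ (2 * σ) : ℝ) * u t n = 0)) ∧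
        -- uniqueness
        (∀ v v' : ℝ → lp (fun _ : ℤ => ℂ) 2,
          v 0 = u₀ →
          (∀ t ∈ Set.Ici (0:ℝ), HasDerivAt v (v' t) t) →
          ContinuousOn v' (Set.Ici (0:ℝ)) →
          (∀ t ∈ Set.Ici (0:ℝ), ∀ n : ℤ,
            Complex.I * v' t n + (1/ε : ℂ) * (v t (n-1) - 2 * v t n + v t (n+1))
              + (‖v t n‖ ^ (2 * σ) : ℝ) * v t n = 0) →
          ∀ t ∈ Set.Ici (0:ℝ), v t = u t) :=
  stmt_5_general ε σ hσ
end

section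
/- Let m ∈ ℕ, 0 < σ < ∞, ε > 0, and ω ∈ ℝ with ω ≠ 0. Then there exists a non-trivial (not identically zero) finite sequence φ = (φ_n)_{|n|≤m} of complex numbers which, with the Dirichlet boundary convention φ_{−(m+1)} = φ_{m+1} = 0, satisfies the standing wave equations −(1/ε)(φ_{n−1} − 2φ_n + φ_{n+1}) + ω²φ_n = |φ_n|^{2σ}φ_n for every n with |n| ≤ m. -/
/-!
Take `φₙ = c cos((n - m)π/2)` on `|n| ≤ m` and `0` outside. This sequence vanishes at every
`n` with `n - m` odd, in particular at the boundary points `n = ±(m + 1)`, so it agrees with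
the cosine on `|n| ≤ m + 1` and therefore `φₙ₋₁ + φₙ₊₁ = 0` for `|n| ≤ m`. The equation
then reduces to `(2/ε + ω²) φₙ = |φₙ|^(2σ) φₙ`, and `|φₙ| ∈ {0, c}`, so the amplitude
`c = (2/ε + ω²)^(1/(2σ))` solves it.
-/

open Real

lemma Real.cos_int_mul_pi_div_two_of_odd {k : ℤ} (hk : Odd k) : cos (k * π / 2) = 0 := by
  obtain ⟨j, rfl⟩ := hk
  exact cos_eq_zero_iff.mpr ⟨j, by push_cast; ring⟩

lemma Real.abs_cos_int_mul_pi_div_two_of_even {k : ℤ} (hk : Even k) :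
    |cos (k * π / 2)| = 1 := by
  obtain ⟨j, rfl⟩ := hk
  rw [← abs_cos_int_mul_pi j]
  push_cast
  ring_nf

lemma Real.cos_sub_pi_div_two_add_cos_add_pi_div_two (x : ℝ) :
    cos (x - π / 2) + cos (x + π / 2) = 0 := by
  rw [cos_sub_pi_div_two, cos_add_pi_div_two, add_neg_cancel]

lemma standingWave_eq_of_neighbors_add_eq_zero {σ ε ω : ℝ} {x y z : ℂ} (hxz : x + z = 0)
    (hy : y = 0 ∨ ‖y‖ ^ (2 * σ) = 2 / ε + ω ^ 2) :
    -(1/ε : ℂ) * (x - 2 * y + z) + (ω^2 : ℝ) * y = (‖y‖ ^ (2 * σ) : ℝ) * y := by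
  rcases hy with rfl | hy
  · simp only [mul_zero, sub_zero, add_zero]
    linear_combination (-(1/ε : ℂ)) * hxz
  · rw [hy]
    push_cast
    linear_combination (-(1/ε : ℂ)) * hxz

noncomputable def dirichletCosWave (m : ℕ) (c : ℝ) (n : ℤ) : ℂ :=
  if |n| ≤ (m : ℤ) then ((c * cos (((n - m : ℤ) : ℝ) * π / 2) : ℝ) : ℂ) else 0

namespace dirichletCosWave

variable {m : ℕ} {c : ℝ} {n : ℤ}

lemma eq_zero_of_lt (hn : (m : ℤ) < |n|) : dirichletCosWave m c n = 0 :=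
  if_neg hn.not_ge

lemma apply_self : dirichletCosWave m c m = c := by
  simp [dirichletCosWave]

lemma eq_of_abs_le_succ (hn : |n| ≤ (m : ℤ) + 1) :
    dirichletCosWave m c n = ((c * cos (((n - m : ℤ) : ℝ) * π / 2) : ℝ) : ℂ) := by
  by_cases h : |n| ≤ (m : ℤ)
  · exact if_pos h
  · have hodd : Odd (n - m) := by
      rcases (abs_eq (a := n) (by positivity : (0 : ℤ) ≤ m + 1)).mp (by omega) with rfl | rfl
      · exact ⟨0, by ring⟩
      · exact ⟨-(m : ℤ) - 1, by ring⟩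
    rw [dirichletCosWave, if_neg h, cos_int_mul_pi_div_two_of_odd hodd, mul_zero,
      Complex.ofReal_zero]

lemma sub_one_add_add_one (hn : |n| ≤ (m : ℤ)) :
    dirichletCosWave m c (n - 1) + dirichletCosWave m c (n + 1) = 0 := by
  obtain ⟨hlo, hhi⟩ := abs_le.mp hn
  rw [eq_of_abs_le_succ (abs_le.mpr ⟨by omega, by omega⟩),
    eq_of_abs_le_succ (abs_le.mpr ⟨by omega, by omega⟩), ← Complex.ofReal_add, ← mul_add,
    Complex.ofReal_eq_zero]
  have hprev : ((n - 1 - m : ℤ) : ℝ) * π / 2 = ((n - m : ℤ) : ℝ) * π / 2 - π / 2 := by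
    push_cast; ring
  have hnext : ((n + 1 - m : ℤ) : ℝ) * π / 2 = ((n - m : ℤ) : ℝ) * π / 2 + π / 2 := by
    push_cast; ring
  rw [hprev, hnext, cos_sub_pi_div_two_add_cos_add_pi_div_two, mul_zero]

lemma eq_zero_or_norm_eq (hc : 0 ≤ c) :
    dirichletCosWave m c n = 0 ∨ ‖dirichletCosWave m c n‖ = c := by
  unfold dirichletCosWave
  split_ifs
  · rcases Int.even_or_odd (n - m) with heven | hodd
    · right
      rw [Complex.norm_real, norm_mul, Real.norm_eq_abs, Real.norm_eq_abs,
        abs_cos_int_mul_pi_div_two_of_even heven, abs_of_nonneg hc, mul_one]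
    · left
      rw [cos_int_mul_pi_div_two_of_odd hodd, mul_zero, Complex.ofReal_zero]
  · exact Or.inl rfl

end dirichletCosWave

theorem stmt_9_general (m : ℕ) (σ ε ω : ℝ) (hσ : 0 < σ) (hε : 0 < ε) :
    ∃ φ : ℤ → ℂ,
      (∀ n : ℤ, (m : ℤ) < |n| → φ n = 0) ∧
      (∃ n : ℤ, |n| ≤ (m : ℤ) ∧ φ n ≠ 0) ∧
      ∀ n : ℤ, |n| ≤ (m : ℤ) →
        -(1/ε : ℂ) * (φ (n-1) - 2 * φ n + φ (n+1)) + (ω^2 : ℝ) * φ n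
          = (‖φ n‖ ^ (2 * σ) : ℝ) * φ n := by
  have hbase : 0 < 2 / ε + ω ^ 2 := by positivity
  set c := (2 / ε + ω ^ 2) ^ (2 * σ)⁻¹
  have hc : 0 < c := rpow_pos_of_pos hbase _
  have hcpow : c ^ (2 * σ) = 2 / ε + ω ^ 2 := rpow_inv_rpow hbase.le (by positivity)
  refine ⟨dirichletCosWave m c, fun n => dirichletCosWave.eq_zero_of_lt,
    ⟨m, by simp, by simp [dirichletCosWave.apply_self, hc.ne']⟩, fun n hn => ?_⟩
  exact standingWave_eq_of_neighbors_add_eq_zero (dirichletCosWave.sub_one_add_add_one hn)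
    ((dirichletCosWave.eq_zero_or_norm_eq hc.le).imp_right fun h => by rw [h, hcpow])

/-- For every `m ∈ ℕ`, `σ > 0`, `ε > 0` and `ω ≠ 0`, the finite
Dirichlet standing-wave problem
`−(1/ε)(φₙ₋₁ − 2φₙ + φₙ₊₁) + ω²φₙ = |φₙ|^(2σ) φₙ` for `|n| ≤ m`,
with `φ₋₍ₘ₊₁₎ = φₘ₊₁ = 0`, admits a non-trivial solution. -/
theorem stmt_9 (m : ℕ) (σ ε ω : ℝ) (hσ : 0 < σ) (hε : 0 < ε) (hω : ω ≠ 0) :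
    ∃ φ : ℤ → ℂ,
      (∀ n : ℤ, (m : ℤ) < |n| → φ n = 0) ∧
      (∃ n : ℤ, |n| ≤ (m : ℤ) ∧ φ n ≠ 0) ∧
      ∀ n : ℤ, |n| ≤ (m : ℤ) →
        -(1/ε : ℂ) * (φ (n-1) - 2 * φ n + φ (n+1)) + (ω^2 : ℝ) * φ n
          = (‖φ n‖ ^ (2 * σ) : ℝ) * φ n :=
  stmt_9_general m σ ε ω hσ hε
end

section
/- Let f : ℝ → ℝ be continuously differentiable (f and f′ continuous), and let w : ℤ → ℝ be a weight with w_n ≥ 1 for all n. Consider the weighted space ℓ²_w of two-sided complex sequences z with ‖z‖²_{ℓ²_w} = Σ_{n∈ℤ} w_n |z_n|² < ∞. Then the operator T : ℓ²_w → ℓ²_w defined by (T(z))_n = f(|z_n|²)z_n is well defined, maps bounded subsets of ℓ²_w to bounded subsets of ℓ²_w, and is Lipschitz continuous on bounded subsets of ℓ²_w: for every R > 0 there exists L(R) > 0 such that ‖T(z) − T(z′)‖_{ℓ²_w} ≤ L(R)‖z − z′‖_{ℓ²_w} whenever ‖z‖_{ℓ²_w} ≤ R and ‖z′‖_{ℓ²_w}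 ≤ R. -/
/-!
The pointwise map `a ↦ f(|a|²) a` is `C¹` on `ℂ ≅ ℝ²`, hence Lipschitz on every closed disc,
and it fixes `0`. Since `wₙ ≥ 1`, a sequence of `ℓ²_w`-norm at most `R` has all its entries in
the disc of radius `R`, so the pointwise Lipschitz bound `|T(z)ₙ - T(z')ₙ| ≤ L |zₙ - z'ₙ|` can be
squared, weighted and summed. Boundedness and well-definedness are the case `z' = 0`.
-/

section WeightedSquareSums

variable {ι E F : Type*} [SeminormedAddCommGroup E] [SeminormedAddCommGroup F] {w : ι → ℝ}

theorem mul_norm_sq_le_of_norm_le_mul {a : ℝ} (ha : 0 ≤ a) {x : E} {y : F} {C : ℝ}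
    (h : ‖x‖ ≤ C * ‖y‖) : a * ‖x‖ ^ 2 ≤ C ^ 2 * (a * ‖y‖ ^ 2) := by
  have hsq : ‖x‖ ^ 2 ≤ (C * ‖y‖) ^ 2 := pow_le_pow_left₀ (norm_nonneg x) h 2
  calc a * ‖x‖ ^ 2 ≤ a * (C * ‖y‖) ^ 2 := mul_le_mul_of_nonneg_left hsq ha
    _ = C ^ 2 * (a * ‖y‖ ^ 2) := by ring

theorem summable_weighted_sq_of_norm_le_mul (hw : ∀ i, 0 ≤ w i) {x : ι → E} {y : ι → F}
    {C : ℝ} (h : ∀ i, ‖x i‖ ≤ C * ‖y i‖) (hy : Summable fun i => w i * ‖y i‖ ^ 2) :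
    Summable fun i => w i * ‖x i‖ ^ 2 :=
  (hy.mul_left (C ^ 2)).of_nonneg_of_le (fun i => by have := hw i; positivity)
    fun i => mul_norm_sq_le_of_norm_le_mul (hw i) (h i)

theorem tsum_weighted_sq_le_of_norm_le_mul (hw : ∀ i, 0 ≤ w i) {x : ι → E} {y : ι → F}
    {C : ℝ} (h : ∀ i, ‖x i‖ ≤ C * ‖y i‖) (hy : Summable fun i => w i * ‖y i‖ ^ 2) :
    ∑' i, w i * ‖x i‖ ^ 2 ≤ C ^ 2 * ∑' i, w i * ‖y i‖ ^ 2 := by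
  rw [← tsum_mul_left]
  exact (summable_weighted_sq_of_norm_le_mul hw h hy).tsum_le_tsum
    (fun i => mul_norm_sq_le_of_norm_le_mul (hw i) (h i)) (hy.mul_left _)

theorem summable_weighted_sq_sub (hw : ∀ i, 0 ≤ w i) {x y : ι → E}
    (hx : Summable fun i => w i * ‖x i‖ ^ 2) (hy : Summable fun i => w i * ‖y i‖ ^ 2) :
    Summable fun i => w i * ‖x i - y i‖ ^ 2 := by
  refine ((hx.add hy).mul_left 2).of_nonneg_of_le (fun i => by have := hw i; positivity)
    fun i => ?_
  have hsq : ‖x i - y i‖ ^ 2 ≤ 2 * (‖x i‖ ^ 2 + ‖y i‖ ^ 2) :=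
    (pow_le_pow_left₀ (norm_nonneg _) (norm_sub_le _ _) 2).trans add_sq_le
  calc w i * ‖x i - y i‖ ^ 2 ≤ w i * (2 * (‖x i‖ ^ 2 + ‖y i‖ ^ 2)) :=
        mul_le_mul_of_nonneg_left hsq (hw i)
    _ = 2 * (w i * ‖x i‖ ^ 2 + w i * ‖y i‖ ^ 2) := by ring

theorem norm_le_of_tsum_weighted_sq_le (hw : ∀ i, 1 ≤ w i) {x : ι → E}
    (hx : Summable fun i => w i * ‖x i‖ ^ 2) {R : ℝ} (hR : 0 ≤ R)
    (hxR : ∑' i, w i * ‖x i‖ ^ 2 ≤ R ^ 2) (i : ι) : ‖x i‖ ≤ R := by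
  have hw0 : ∀ j, 0 ≤ w j := fun j => zero_le_one.trans (hw j)
  refine (pow_le_pow_iff_left₀ (norm_nonneg _) hR two_ne_zero).1 ?_
  calc ‖x i‖ ^ 2 ≤ w i * ‖x i‖ ^ 2 := le_mul_of_one_le_left (by positivity) (hw i)
    _ ≤ ∑' j, w j * ‖x j‖ ^ 2 := hx.le_tsum i fun j _ => by have := hw0 j; positivity
    _ ≤ R ^ 2 := hxR

end WeightedSquareSums

section NormSqScale

/-- The pointwise action `a ↦ f(|a|²) a` of the operator `T`. -/
noncomputable def normSqScale (f : ℝ → ℝ) (a : ℂ) : ℂ := (f (‖a‖ ^ 2) : ℂ) * a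

variable {f : ℝ → ℝ}

@[simp]
theorem normSqScale_zero : normSqScale f 0 = 0 := mul_zero _

theorem ContDiff.normSqScale (hf : ContDiff ℝ 1 f) : ContDiff ℝ 1 (normSqScale f) :=
  (Complex.ofRealCLM.contDiff.comp (hf.comp (contDiff_norm_sq ℝ))).mul contDiff_id

theorem exists_pos_lipschitz_normSqScale (hf : ContDiff ℝ 1 f) (R : ℝ) :
    ∃ L : ℝ, 0 < L ∧ ∀ a b : ℂ, ‖a‖ ≤ R → ‖b‖ ≤ R →
      ‖normSqScale f a - normSqScale f b‖ ≤ L * ‖a - b‖ := by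
  obtain ⟨K, hK⟩ := hf.normSqScale.contDiffOn.exists_lipschitzOnWith one_ne_zero
    (convex_closedBall 0 R) (isCompact_closedBall 0 R)
  refine ⟨K + 1, by positivity, fun a b ha hb => ?_⟩
  rw [← dist_eq_norm, ← dist_eq_norm]
  calc dist (normSqScale f a) (normSqScale f b) ≤ K * dist a b :=
        hK.dist_le_mul a (mem_closedBall_zero_iff.2 ha) b (mem_closedBall_zero_iff.2 hb)
    _ ≤ (K + 1) * dist a b := by gcongr; linarith

theorem exists_norm_normSqScale_le_mul (hf : ContDiff ℝ 1 f) {R : ℝ} (hR : 0 ≤ R) :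
    ∃ L : ℝ, ∀ a : ℂ, ‖a‖ ≤ R → ‖normSqScale f a‖ ≤ L * ‖a‖ := by
  obtain ⟨L, -, hL⟩ := exists_pos_lipschitz_normSqScale hf R
  exact ⟨L, fun a ha => by simpa using hL a 0 ha (by simpa using hR)⟩

end NormSqScale

/-- For `f : ℝ → ℝ` continuously differentiable and a weight
`w : ℤ → ℝ` with `wₙ ≥ 1`, the operator `(T z)ₙ = f(|zₙ|²) zₙ` on the weighted space
`ℓ²_w` (sequences with `Σₙ wₙ|zₙ|² < ∞`) is well defined, bounded on bounded sets and
Lipschitz on bounded sets. -/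
theorem stmt_18 (f : ℝ → ℝ) (hf : ContDiff ℝ 1 f)
    (w : ℤ → ℝ) (hw : ∀ n : ℤ, 1 ≤ w n) :
    -- well defined: T maps ℓ²_w into ℓ²_w
    (∀ z : ℤ → ℂ, Summable (fun n => w n * ‖z n‖ ^ 2) →
      Summable (fun n => w n * ‖(f (‖z n‖ ^ 2) : ℂ) * z n‖ ^ 2)) ∧
    -- bounded on bounded sets
    (∀ R : ℝ, 0 < R → ∃ C : ℝ,
      ∀ z : ℤ → ℂ, Summable (fun n => w n * ‖z n‖ ^ 2) →
        (∑' n : ℤ, w n * ‖z n‖ ^ 2) ≤ R ^ 2 →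
        (∑' n : ℤ, w n * ‖(f (‖z n‖ ^ 2) : ℂ) * z n‖ ^ 2) ≤ C) ∧
    -- Lipschitz on bounded sets
    (∀ R : ℝ, 0 < R → ∃ L : ℝ, 0 < L ∧
      ∀ z z' : ℤ → ℂ,
        Summable (fun n => w n * ‖z n‖ ^ 2) →
        Summable (fun n => w n * ‖z' n‖ ^ 2) →
        (∑' n : ℤ, w n * ‖z n‖ ^ 2) ≤ R ^ 2 →
        (∑' n : ℤ, w n * ‖z' n‖ ^ 2) ≤ R ^ 2 →
        (∑' n : ℤ, w n * ‖(f (‖z n‖ ^ 2) : ℂ) * z n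
            - (f (‖z' n‖ ^ 2) : ℂ) * z' n‖ ^ 2)
          ≤ L ^ 2 * ∑' n : ℤ, w n * ‖z n - z' n‖ ^ 2) := by
  have hw0 : ∀ n, 0 ≤ w n := fun n => zero_le_one.trans (hw n)
  refine ⟨fun z hz => ?_, fun R hR => ?_, fun R hR => ?_⟩
  · set S := ∑' n, w n * ‖z n‖ ^ 2
    have hS : S ≤ √S ^ 2 :=
      (Real.sq_sqrt (tsum_nonneg fun n => by have := hw0 n; positivity)).ge
    obtain ⟨L, hL⟩ := exists_norm_normSqScale_le_mul hf (Real.sqrt_nonneg S)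
    exact summable_weighted_sq_of_norm_le_mul hw0
      (fun n => hL _ (norm_le_of_tsum_weighted_sq_le hw hz (Real.sqrt_nonneg S) hS n)) hz
  · obtain ⟨L, hL⟩ := exists_norm_normSqScale_le_mul hf hR.le
    refine ⟨L ^ 2 * R ^ 2, fun z hz hzR => ?_⟩
    calc _ ≤ L ^ 2 * ∑' n, w n * ‖z n‖ ^ 2 := tsum_weighted_sq_le_of_norm_le_mul hw0
            (fun n => hL _ (norm_le_of_tsum_weighted_sq_le hw hz hR.le hzR n)) hz
      _ ≤ L ^ 2 * R ^ 2 := by gcongr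
  · obtain ⟨L, hL, hLip⟩ := exists_pos_lipschitz_normSqScale hf R
    refine ⟨L, hL, fun z z' hz hz' hzR hz'R => ?_⟩
    exact tsum_weighted_sq_le_of_norm_le_mul hw0
      (fun n => hLip _ _ (norm_le_of_tsum_weighted_sq_le hw hz hR.le hzR n)
        (norm_le_of_tsum_weighted_sq_le hw hz' hR.le hz'R n))
      (summable_weighted_sq_sub hw0 hz hz')
end

section
/- Let f : ℝ → ℝ be continuously differentiable, δ > 0, and let w : ℤ → ℝ be a weight satisfying condition (W): w_n ≥ 1, |w_{n+1} − w_n| ≤ d₁ w_n, and d̲₂ w_n ≤ w_{n+1} for all n ∈ ℤ, with constants d₁ > 0, d̲₂ > 0. Assume γ := δ/2 − 2 d₁ d̲₂^{−1/2} > 0, and let g ∈ ℓ²_w. If u : [0, ∞) → ℓ²_w is a continuously differentiable solution of i u̇_n + (u_{n−1} − 2u_n + u_{n+1}) + iδ u_n + f(|u_n|²)u_n = g_n (n ∈ ℤ) with u(0) = u₀ ∈ ℓ²_w, then for all t ≥ 0, ‖u(t)‖²_{ℓ²_w} ≤ ‖u₀‖²_{ℓ²_w} e^{−2γt} + (1/(2δγ))‖g‖²_{ℓ²_w}(1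 − e^{−2γt}); in particular the system possesses a bounded absorbing ball in ℓ²_w. -/
/-!
Work with `v = √w · u ∈ ℓ²`, so that `‖v‖² = Σ wₙ|uₙ|²`. Multiplying the equation by `wₙ ūₙ` and
taking imaginary parts kills the nonlinearity and gives
`½ d/dt ‖v‖² = Σ wₙ (Jₙ₋₁ − Jₙ) − δ‖v‖² + Σ wₙ Im(ūₙ gₙ)` with the current `Jₙ = Im(ūₙ uₙ₊₁)`.
Summation by parts turns the current term into `Σ (wₙ₊₁ − wₙ) Jₙ`, which condition (W) bounds by
`d₁ d̲₂^(−1/2) ‖v‖²`; Young's inequality absorbs the forcing term into `δ/2 ‖v‖² + ‖g‖²/(2δ)`.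
Hence `d/dt ‖v‖² ≤ −2γ ‖v‖² + ‖g‖²/δ`, and Grönwall's inequality gives the bound.
-/

open scoped ComplexConjugate InnerProductSpace
open Complex

theorem sqrt_mul_weight_mul_le {d w₀ w₁ : ℝ} (hd : 0 ≤ d) (hw₀ : 0 ≤ w₀) (h : d * w₀ ≤ w₁)
    (α β : ℝ) : √d * (w₀ * (α * β)) ≤ (w₀ * α ^ 2 + w₁ * β ^ 2) / 2 := by
  have hsq : w₀ * (α - √d * β) ^ 2 = w₀ * α ^ 2 - 2 * (√d * (w₀ * (α * β))) + d * w₀ * β ^ 2 := by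
    linear_combination (w₀ * β ^ 2) * Real.sq_sqrt hd
  nlinarith [mul_nonneg hw₀ (sq_nonneg (α - √d * β)), mul_le_mul_of_nonneg_right h (sq_nonneg β)]

theorem weight_mul_mul_le {δ w : ℝ} (hδ : 0 < δ) (hw : 0 ≤ w) (α β : ℝ) :
    w * (α * β) ≤ δ / 2 * (w * α ^ 2) + w * β ^ 2 / (2 * δ) := by
  have hsq : 0 ≤ w * (δ * α - β) ^ 2 / (2 * δ) := by positivity
  have e : w * (δ * α - β) ^ 2 / (2 * δ)
      = δ / 2 * (w * α ^ 2) + w * β ^ 2 / (2 * δ) - w * (α * β) := by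
    field_simp; ring
  linarith

theorem hasSum_mul_sub_shift {w J : ℤ → ℝ} {A T : ℝ} (hA : HasSum (fun n => w n * J n) A)
    (hT : HasSum (fun n => (w (n + 1) - w n) * J n) T) :
    HasSum (fun n => w n * (J (n - 1) - J n)) T := by
  have h₁ : HasSum (fun n => w (n + 1) * J n) (T + A) := by
    simpa only [sub_mul, sub_add_cancel] using hT.add hA
  have h₂ : HasSum (fun n => w n * J (n - 1)) (T + A) := by
    rw [← (Equiv.subRight (1 : ℤ)).hasSum_iff] at h₁
    simpa only [Function.comp_def, Equiv.subRight_apply, sub_add_cancel] using h₁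
  simpa only [mul_sub, add_sub_cancel_right] using h₂.sub hA

theorem hasSum_weight_mul_norm_sq {ι : Type*} {w : ι → ℝ} (hw : ∀ i, 0 ≤ w i) {a : ι → ℂ}
    {V : lp (fun _ : ι => ℂ) 2} (hV : ∀ i, V i = (√(w i) : ℂ) * a i) :
    HasSum (fun i => w i * ‖a i‖ ^ 2) (‖V‖ ^ 2) := by
  convert lp.hasSum_norm (p := 2) (by norm_num) V using 1
  · funext i
    rw [ENNReal.toReal_ofNat, Real.rpow_two, hV i, norm_mul, norm_real,
      Real.norm_of_nonneg (Real.sqrt_nonneg _), mul_pow, Real.sq_sqrt (hw i)]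
  · rw [ENNReal.toReal_ofNat, Real.rpow_two]

theorem hasSum_re_inner_lp {ι : Type*} (V V' : lp (fun _ : ι => ℂ) 2) :
    HasSum (fun i => (conj (V i) * V' i).re) (⟪V, V'⟫_ℂ).re := by
  simpa [mul_comm] using (lp.hasSum_inner V V').mapL reCLM

theorem HasDerivAt.norm_sq_complex {F : Type*} [NormedAddCommGroup F] [InnerProductSpace ℂ F]
    {f : ℝ → F} {f' : F} {x : ℝ} (hf : HasDerivAt f f' x) :
    HasDerivAt (fun t => ‖f t‖ ^ 2) (2 * (⟪f x, f'⟫_ℂ).re) x := by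
  let := InnerProductSpace.complexToReal (G := F)
  simpa only [real_inner_eq_re_inner, RCLike.re_to_complex] using hf.norm_sq

theorem le_gronwallBound_of_hasDerivAt {y y' : ℝ → ℝ} {K ε : ℝ}
    (hy : ∀ t ∈ Set.Ici (0 : ℝ), HasDerivAt y (y' t) t)
    (bound : ∀ t ∈ Set.Ici (0 : ℝ), y' t ≤ K * y t + ε) {t : ℝ} (ht : 0 ≤ t) :
    y t ≤ gronwallBound (y 0) K ε t := by
  simpa using le_gronwallBound_of_liminf_deriv_right_le (a := 0) (b := t)
    (fun s hs => (hy s hs.1).continuousAt.continuousWithinAt)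
    (fun s hs _ hr => (hy s hs.1).hasDerivWithinAt.liminf_right_slope_le hr) le_rfl
    (fun s hs => bound s hs.1) t ⟨ht, le_rfl⟩

def latticeCurrent (a : ℤ → ℂ) (n : ℤ) : ℝ := (conj (a n) * a (n + 1)).im

theorem abs_latticeCurrent_le (a : ℤ → ℂ) (n : ℤ) :
    |latticeCurrent a n| ≤ ‖a n‖ * ‖a (n + 1)‖ := by
  simpa only [latticeCurrent, norm_mul, RCLike.norm_conj] using
    abs_im_le_norm (conj (a n) * a (n + 1))

theorem re_conj_mul_eq_of_dnls {a : ℤ → ℂ} {b g : ℂ} {δ r : ℝ} {n : ℤ}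
    (h : I * b + (a (n - 1) - 2 * a n + a (n + 1)) + I * δ * a n + r * a n = g) :
    (conj (a n) * b).re
      = latticeCurrent a (n - 1) - latticeCurrent a n - δ * ‖a n‖ ^ 2 + (conj (a n) * g).im := by
  subst h
  simp only [latticeCurrent, sub_add_cancel, Complex.sq_norm, normSq_apply, mul_re, mul_im,
    add_re, add_im, sub_re, sub_im, conj_re, conj_im, I_re, I_im, ofReal_re, ofReal_im,
    re_ofNat, im_ofNat]
  ring

theorem re_conj_sqrt_mul_mul {w : ℝ} (hw : 0 < w) (a v : ℂ) :
    (conj ((√w : ℂ) * a) * v).re = w * (conj a * (v / (√w : ℂ))).re := by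
  have hs : ((√w : ℝ) : ℂ) ≠ 0 := ofReal_ne_zero.2 (Real.sqrt_pos.2 hw).ne'
  have hsq : ((√w : ℝ) : ℂ) * (√w : ℝ) = w := by rw [← ofReal_mul, Real.mul_self_sqrt hw.le]
  rw [← re_ofReal_mul, map_mul, conj_ofReal, ← hsq]
  field_simp

theorem exists_hasSum_weight_mul_im_le {ι : Type*} {δ Y G : ℝ} (hδ : 0 < δ) {w : ι → ℝ}
    (hw : ∀ i, 0 ≤ w i) {a g : ι → ℂ} (ha : HasSum (fun i => w i * ‖a i‖ ^ 2) Y)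
    (hg : HasSum (fun i => w i * ‖g i‖ ^ 2) G) :
    ∃ F, HasSum (fun i => w i * (conj (a i) * g i).im) F ∧ F ≤ δ / 2 * Y + G / (2 * δ) := by
  have hY := (ha.mul_left (δ / 2)).add (hg.div_const (2 * δ))
  have hle : ∀ i, ‖w i * (conj (a i) * g i).im‖
      ≤ δ / 2 * (w i * ‖a i‖ ^ 2) + w i * ‖g i‖ ^ 2 / (2 * δ) := by
    intro i
    calc ‖w i * (conj (a i) * g i).im‖ ≤ w i * (‖a i‖ * ‖g i‖) := by
          rw [norm_mul, Real.norm_of_nonneg (hw i)]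
          refine mul_le_mul_of_nonneg_left ?_ (hw i)
          simpa only [Real.norm_eq_abs, norm_mul, RCLike.norm_conj] using
            abs_im_le_norm (conj (a i) * g i)
      _ ≤ _ := weight_mul_mul_le hδ (hw i) _ _
  have hF := (hY.summable.of_norm_bounded hle).hasSum
  exact ⟨_, hF, hasSum_le (fun i => (le_abs_self _).trans (hle i)) hF hY⟩

theorem hasSum_weight_mul_norm_sq_shift_avg {Y : ℝ} {w : ℤ → ℝ} {a : ℤ → ℂ}
    (ha : HasSum (fun n => w n * ‖a n‖ ^ 2) Y) :
    HasSum (fun n => (w n * ‖a n‖ ^ 2 + w (n + 1) * ‖a (n + 1)‖ ^ 2) / 2) Y := by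
  have hshift : HasSum (fun n => w (n + 1) * ‖a (n + 1)‖ ^ 2) Y :=
    (Equiv.addRight (1 : ℤ)).hasSum_iff.2 ha
  simpa only [add_self_div_two] using (ha.add hshift).div_const 2

theorem exists_hasSum_weight_mul_latticeCurrent_sub_le {d₁ d₂ Y : ℝ} (hd₁ : 0 ≤ d₁)
    (hd₂ : 0 < d₂) {w : ℤ → ℝ} (hw : ∀ n, 0 ≤ w n)
    (hwd₁ : ∀ n, |w (n + 1) - w n| ≤ d₁ * w n) (hwd₂ : ∀ n, d₂ * w n ≤ w (n + 1))
    {a : ℤ → ℂ} (ha : HasSum (fun n => w n * ‖a n‖ ^ 2) Y) :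
    ∃ T, HasSum (fun n => w n * (latticeCurrent a (n - 1) - latticeCurrent a n)) T ∧
      T ≤ d₁ / √d₂ * Y := by
  set P : ℤ → ℝ := fun n => (w n * ‖a n‖ ^ 2 + w (n + 1) * ‖a (n + 1)‖ ^ 2) / 2
  have hP : HasSum P Y := hasSum_weight_mul_norm_sq_shift_avg ha
  have hs : 0 < √d₂ := Real.sqrt_pos.2 hd₂
  have hbond : ∀ n, w n * (‖a n‖ * ‖a (n + 1)‖) ≤ P n / √d₂ := fun n => by
    rw [le_div_iff₀ hs, mul_comm]
    exact sqrt_mul_weight_mul_le hd₂.le (hw n) (hwd₂ n) _ _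
  have hA : ∀ n, ‖w n * latticeCurrent a n‖ ≤ P n / √d₂ := fun n => by
    rw [norm_mul, Real.norm_of_nonneg (hw n)]
    exact (mul_le_mul_of_nonneg_left (abs_latticeCurrent_le a n) (hw n)).trans (hbond n)
  have hT : ∀ n, ‖(w (n + 1) - w n) * latticeCurrent a n‖ ≤ d₁ / √d₂ * P n := fun n =>
    calc ‖(w (n + 1) - w n) * latticeCurrent a n‖
        ≤ d₁ * w n * (‖a n‖ * ‖a (n + 1)‖) := by
          rw [norm_mul, Real.norm_eq_abs, Real.norm_eq_abs]
          exact mul_le_mul (hwd₁ n) (abs_latticeCurrent_le a n) (abs_nonneg _)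
            (mul_nonneg hd₁ (hw n))
      _ ≤ d₁ * (P n / √d₂) := by rw [mul_assoc]; exact mul_le_mul_of_nonneg_left (hbond n) hd₁
      _ = d₁ / √d₂ * P n := by ring
  have hsumA := ((hP.div_const √d₂).summable.of_norm_bounded hA).hasSum
  have hsumT := ((hP.mul_left (d₁ / √d₂)).summable.of_norm_bounded hT).hasSum
  exact ⟨_, hasSum_mul_sub_shift hsumA hsumT,
    hasSum_le (fun n => (le_abs_self _).trans (hT n)) hsumT (hP.mul_left _)⟩

theorem two_mul_re_inner_le_of_dnls {δ d₁ d₂ G : ℝ} (hδ : 0 < δ) (hd₁ : 0 ≤ d₁) (hd₂ : 0 < d₂)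
    {w : ℤ → ℝ} (hw : ∀ n, 0 < w n) (hwd₁ : ∀ n, |w (n + 1) - w n| ≤ d₁ * w n)
    (hwd₂ : ∀ n, d₂ * w n ≤ w (n + 1)) {g : ℤ → ℂ} (hg : HasSum (fun n => w n * ‖g n‖ ^ 2) G)
    {a : ℤ → ℂ} {r : ℤ → ℝ} {V V' : lp (fun _ : ℤ => ℂ) 2}
    (hV : ∀ n, V n = (√(w n) : ℂ) * a n)
    (hE : ∀ n, I * (V' n / (√(w n) : ℂ)) + (a (n - 1) - 2 * a n + a (n + 1)) + I * δ * a n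
      + (r n : ℂ) * a n = g n) :
    2 * (⟪V, V'⟫_ℂ).re ≤ (-δ + 2 * d₁ / √d₂) * ‖V‖ ^ 2 + G / δ := by
  have hS := hasSum_weight_mul_norm_sq (fun n => (hw n).le) hV
  obtain ⟨T, hT, hTle⟩ := exists_hasSum_weight_mul_latticeCurrent_sub_le hd₁ hd₂
    (fun n => (hw n).le) hwd₁ hwd₂ hS
  obtain ⟨F, hF, hFle⟩ := exists_hasSum_weight_mul_im_le hδ (fun n => (hw n).le) hS hg
  have hterm : ∀ n, (conj (V n) * V' n).re = w n * (latticeCurrent a (n - 1) - latticeCurrent a n)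
      - δ * (w n * ‖a n‖ ^ 2) + w n * (conj (a n) * g n).im := fun n => by
    rw [hV n, re_conj_sqrt_mul_mul (hw n), re_conj_mul_eq_of_dnls (hE n)]
    ring
  have hsum : HasSum (fun n => (conj (V n) * V' n).re) (T - δ * ‖V‖ ^ 2 + F) := by
    simp only [hterm]
    exact (hT.sub (hS.mul_left δ)).add hF
  rw [(hasSum_re_inner_lp V V').unique hsum]
  have hG : G / (2 * δ) = G / δ / 2 := by ring
  rw [mul_div_assoc]
  linarith

theorem stmt_19_general (f : ℝ → ℝ) (δ d₁ d₂ γ : ℝ)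
    (hδ : 0 < δ) (hd₁ : 0 < d₁) (hd₂ : 0 < d₂)
    (w : ℤ → ℝ) (hw1 : ∀ n : ℤ, 1 ≤ w n)
    (hwd₁ : ∀ n : ℤ, |w (n+1) - w n| ≤ d₁ * w n)
    (hwd₂ : ∀ n : ℤ, d₂ * w n ≤ w (n+1))
    (hγ : γ = δ/2 - 2 * d₁ / Real.sqrt d₂) (hγpos : 0 < γ)
    (g : ℤ → ℂ) (hg : Summable (fun n : ℤ => w n * ‖g n‖ ^ 2))
    (u : ℝ → ℤ → ℂ) (v v' : ℝ → lp (fun _ : ℤ => ℂ) 2)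
    (hv : ∀ t : ℝ, ∀ n : ℤ, v t n = (Real.sqrt (w n) : ℂ) * u t n)
    (hderiv : ∀ t ∈ Set.Ici (0:ℝ), HasDerivAt v (v' t) t)
    (heq : ∀ t ∈ Set.Ici (0:ℝ), ∀ n : ℤ,
      Complex.I * (v' t n / (Real.sqrt (w n) : ℂ))
        + (u t (n-1) - 2 * u t n + u t (n+1))
        + Complex.I * δ * u t n
        + (f (‖u t n‖ ^ 2) : ℂ) * u t n = g n) :
    ∀ t ∈ Set.Ici (0:ℝ),
      (∑' n : ℤ, w n * ‖u t n‖ ^ 2)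
        ≤ (∑' n : ℤ, w n * ‖u 0 n‖ ^ 2) * Real.exp (-2 * γ * t)
          + (1/(2 * δ * γ)) * (∑' n : ℤ, w n * ‖g n‖ ^ 2)
              * (1 - Real.exp (-2 * γ * t)) := by
  intro t ht
  have hw : ∀ n, 0 < w n := fun n => zero_lt_one.trans_le (hw1 n)
  have hnorm : ∀ s, ∑' n, w n * ‖u s n‖ ^ 2 = ‖v s‖ ^ 2 := fun s =>
    (hasSum_weight_mul_norm_sq (fun n => (hw n).le) (hv s)).tsum_eq
  have hdecay : ∀ s ∈ Set.Ici (0 : ℝ), 2 * (⟪v s, v' s⟫_ℂ).re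
      ≤ -2 * γ * ‖v s‖ ^ 2 + (∑' n, w n * ‖g n‖ ^ 2) / δ := fun s hs => by
    have hc : 0 ≤ d₁ / √d₂ * ‖v s‖ ^ 2 := by positivity
    have := two_mul_re_inner_le_of_dnls hδ hd₁.le hd₂ hw hwd₁ hwd₂ hg.hasSum (hv s) (heq s hs)
    rw [mul_div_assoc] at this
    rw [hγ, mul_div_assoc]
    linarith
  have key := le_gronwallBound_of_hasDerivAt (fun s hs => (hderiv s hs).norm_sq_complex) hdecay ht
  rw [gronwallBound_of_K_ne_0 (by linarith)] at key
  rw [hnorm, hnorm]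
  refine key.trans_eq ?_
  field_simp
  ring

/-- Absorbing-ball estimate in the weighted space `ℓ²_w`: under
condition (W) on the weight (`wₙ ≥ 1`, `|wₙ₊₁ − wₙ| ≤ d₁wₙ`, `d̲₂wₙ ≤ wₙ₊₁`) and
`γ = δ/2 − 2d₁ d̲₂^(−1/2) > 0`, any continuously differentiable `ℓ²_w`-valued solution
(encoded via the isometric rescaling `v(t)ₙ = √(wₙ) u(t)ₙ ∈ ℓ²`) of
`i u̇ₙ + (uₙ₋₁ − 2uₙ + uₙ₊₁) + iδuₙ + f(|uₙ|²)uₙ = gₙ` satisfies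
`Σₙ wₙ|uₙ(t)|² ≤ (Σₙ wₙ|uₙ(0)|²) e^(−2γt) + (1/(2δγ)) (Σₙ wₙ|gₙ|²)(1 − e^(−2γt))`. -/
theorem stmt_19 (f : ℝ → ℝ) (hf : ContDiff ℝ 1 f) (δ d₁ d₂ γ : ℝ)
    (hδ : 0 < δ) (hd₁ : 0 < d₁) (hd₂ : 0 < d₂)
    (w : ℤ → ℝ) (hw1 : ∀ n : ℤ, 1 ≤ w n)
    (hwd₁ : ∀ n : ℤ, |w (n+1) - w n| ≤ d₁ * w n)
    (hwd₂ : ∀ n : ℤ, d₂ * w n ≤ w (n+1))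
    (hγ : γ = δ/2 - 2 * d₁ / Real.sqrt d₂) (hγpos : 0 < γ)
    (g : ℤ → ℂ) (hg : Summable (fun n : ℤ => w n * ‖g n‖ ^ 2))
    (u : ℝ → ℤ → ℂ) (v v' : ℝ → lp (fun _ : ℤ => ℂ) 2)
    (hv : ∀ t : ℝ, ∀ n : ℤ, v t n = (Real.sqrt (w n) : ℂ) * u t n)
    (hderiv : ∀ t ∈ Set.Ici (0:ℝ), HasDerivAt v (v' t) t)
    (hcont : ContinuousOn v' (Set.Ici (0:ℝ)))
    (heq : ∀ t ∈ Set.Ici (0:ℝ), ∀ n : ℤ,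
      Complex.I * (v' t n / (Real.sqrt (w n) : ℂ))
        + (u t (n-1) - 2 * u t n + u t (n+1))
        + Complex.I * δ * u t n
        + (f (‖u t n‖ ^ 2) : ℂ) * u t n = g n) :
    ∀ t ∈ Set.Ici (0:ℝ),
      (∑' n : ℤ, w n * ‖u t n‖ ^ 2)
        ≤ (∑' n : ℤ, w n * ‖u 0 n‖ ^ 2) * Real.exp (-2 * γ * t)
          + (1/(2 * δ * γ)) * (∑' n : ℤ, w n * ‖g n‖ ^ 2)
              * (1 - Real.exp (-2 * γ * t)) :=
  stmt_19_general f δ d₁ d₂ γ hδ hd₁ hd₂ w hw1 hwd₁ hwd₂ hγ hγpos g hg u v v' hv hderiv heq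
end
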